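/- arXiv:2512.23657 — 6 statements merged into one kernel-verified Lean document; each statement's English description precedes it below -/
import Mathlib

section
/- For every integer k ≥ 2, the unique positive root α_k of P_k satisfies α_k < φ, where φ = (1+√5)/2 is the golden ratio. -/
/-!
Multiplying by `x - 1` telescopes the geometric sum in `P (n + 2)`:
`(x - 1) * P (n + 2) x = x - 2 - x ^ (n + 1) * (x ^ 2 - x - 1)`.
For `x ≥ φ` the quadratic factor is nonnegative and `x ^ (n + 1) ≥ 1`, so the right-hand side is
at most `-(x - 1) ^ 2 < 0`. Hence `P k` has no root in `[φ, ∞)`.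
-/

/-- `P k x = 2 + x + x^2 + ... + x^(k-2) - x^k`. -/
noncomputable def P (k : ℕ) (x : ℝ) : ℝ := 2 + ∑ i ∈ Finset.Icc 1 (k - 2), x ^ i - x ^ k

open Real goldenRatio

theorem sub_one_mul_P (n : ℕ) (x : ℝ) :
    (x - 1) * P (n + 2) x = x - 2 - x ^ (n + 1) * (x ^ 2 - x - 1) := by
  have hgeom : (∑ i ∈ Finset.Icc 1 n, x ^ i) * (x - 1) = x ^ (n + 1) - x := by
    rw [← Finset.Ico_add_one_right_eq_Icc, geom_sum_Ico_mul x (by omega), pow_one]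
  rw [P, Nat.add_sub_cancel]
  linear_combination hgeom

theorem sq_sub_sub_one_nonneg_of_goldenRatio_le {x : ℝ} (hx : φ ≤ x) : 0 ≤ x ^ 2 - x - 1 := by
  have hfactor : x ^ 2 - x - 1 = (x - φ) * (x - ψ) := by
    linear_combination x * goldenRatio_add_goldenConj - goldenRatio_mul_goldenConj
  rw [hfactor]
  exact mul_nonneg (sub_nonneg.2 hx) (by linarith [goldenConj_neg, goldenRatio_pos])

theorem P_neg_of_goldenRatio_le (n : ℕ) {x : ℝ} (hx : φ ≤ x) : P (n + 2) x < 0 := by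
  have hx1 : 1 < x := one_lt_goldenRatio.trans_le hx
  have hquad := sq_sub_sub_one_nonneg_of_goldenRatio_le hx
  have hpow : 1 ≤ x ^ (n + 1) := one_le_pow₀ hx1.le
  refine neg_of_mul_neg_right ?_ (sub_nonneg.2 hx1.le)
  calc (x - 1) * P (n + 2) x = x - 2 - x ^ (n + 1) * (x ^ 2 - x - 1) := sub_one_mul_P n x
    _ ≤ x - 2 - (x ^ 2 - x - 1) := sub_le_sub_left (le_mul_of_one_le_left hquad hpow) _
    _ = -(x - 1) ^ 2 := by ring
    _ < 0 := neg_neg_of_pos (by positivity)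

theorem root_lt_goldenRatio_general (k : ℕ) (hk : 2 ≤ k) (α : ℝ)
    (hroot : P k α = 0) : α < (1 + Real.sqrt 5) / 2 := by
  obtain ⟨n, rfl⟩ := Nat.exists_eq_add_of_le' hk
  by_contra! h
  exact (P_neg_of_goldenRatio_le n h).ne hroot

theorem root_lt_goldenRatio (k : ℕ) (hk : 2 ≤ k) (α : ℝ)
    (hpos : 0 < α) (hroot : P k α = 0) : α < (1 + Real.sqrt 5) / 2 :=
  root_lt_goldenRatio_general k hk α hroot
end

section
/- The sequence α_k of unique positive roots of P_k(x) = 2 + x + ... + x^{k-2} - x^k is strictly increasing in k (for k ≥ 2). -/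
open Finset Set

theorem sum_Icc_one_succ_pow {R : Type*} [Semiring R] (x : R) (n : ℕ) :
    ∑ i ∈ Icc 1 (n + 1), x ^ i = x + x * ∑ i ∈ Icc 1 n, x ^ i := by
  induction n with
  | zero => simp
  | succ n ih =>
    conv_lhs => rw [sum_Icc_succ_top (by omega), ih]
    rw [sum_Icc_succ_top (by omega), mul_add, ← pow_succ', add_assoc]

theorem pow_mul_pow_le_pow_mul_pow {R : Type*} [CommSemiring R] [PartialOrder R] [IsOrderedRing R]
    {x y : R} (hx : 0 ≤ x) (hxy : x ≤ y) {i m : ℕ} (him : i ≤ m) :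
    y ^ i * x ^ m ≤ x ^ i * y ^ m := by
  obtain ⟨j, rfl⟩ := Nat.exists_eq_add_of_le him
  rw [pow_add, pow_add, ← mul_assoc, mul_comm (y ^ i), ← mul_assoc]
  exact mul_le_mul_of_nonneg_left (pow_le_pow_left₀ hx hxy j)
    (mul_nonneg (pow_nonneg hx i) (pow_nonneg (hx.trans hxy) i))

theorem P_succ {k : ℕ} (hk : 2 ≤ k) (x : ℝ) : P (k + 1) x = x * P k x + 2 - x := by
  obtain ⟨n, rfl⟩ := Nat.exists_eq_add_of_le' hk
  simp only [P, Nat.add_sub_cancel, show n + 2 + 1 - 2 = n + 1 by omega, sum_Icc_one_succ_pow]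
  ring

theorem P_two_neg {k : ℕ} (hk : 2 ≤ k) : P k 2 < 0 := by
  induction k, hk using Nat.le_induction with
  | base => norm_num [P]
  | succ k hk ih => rw [P_succ hk]; linarith

theorem strictAntiOn_P_div_pow {k : ℕ} (hk : 1 ≤ k) :
    StrictAntiOn (fun x => P k x / x ^ k) (Ioi 0) := by
  intro x (hx : 0 < x) y (hy : 0 < y) hxy
  rw [div_lt_div_iff₀ (by positivity) (by positivity)]
  have hpow : x ^ k < y ^ k := pow_lt_pow_left₀ hxy hx.le (by omega)
  have hsum : (∑ i ∈ Icc 1 (k - 2), y ^ i) * x ^ k ≤ (∑ i ∈ Icc 1 (k - 2), x ^ i) * y ^ k := by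
    rw [sum_mul, sum_mul]
    exact sum_le_sum fun i hi ↦
      pow_mul_pow_le_pow_mul_pow hx.le hxy.le ((Finset.mem_Icc.mp hi).2.trans (k.sub_le 2))
  simp only [P]
  linarith

theorem lt_root_iff_P_pos {k : ℕ} (hk : 1 ≤ k) {x α : ℝ} (hx : 0 < x) (hα : 0 < α)
    (hroot : P k α = 0) : x < α ↔ 0 < P k x := by
  rw [← (strictAntiOn_P_div_pow hk).lt_iff_gt hα hx, hroot, zero_div, lt_div_iff₀ (pow_pos hx k), zero_mul]

theorem root_lt_iff_P_neg {k : ℕ} (hk : 1 ≤ k) {x α : ℝ} (hx : 0 < x) (hα : 0 < α)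
    (hroot : P k α = 0) : α < x ↔ P k x < 0 := by
  rw [← (strictAntiOn_P_div_pow hk).lt_iff_gt hx hα, hroot, zero_div, div_lt_iff₀ (pow_pos hx k), zero_mul]

theorem roots_strictly_increasing (k : ℕ) (hk : 2 ≤ k) (α β : ℝ)
    (hαpos : 0 < α) (hα : P k α = 0) (hβpos : 0 < β) (hβ : P (k + 1) β = 0) :
    α < β := by
  have hα_lt_two : α < 2 := (root_lt_iff_P_neg (by omega) two_pos hαpos hα).mpr (P_two_neg hk)
  rw [lt_root_iff_P_pos (by omega) hαpos hβpos hβ, P_succ hk, hα]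
  linarith
end

section
/- Let k ≥ 2 and let (a_D) be a sequence of positive reals satisfying a_D = ∑_{i=2}^{k-1} a_{D-i} + 2·a_{D-k} + k for all D ≥ k. Then there exist constants 0 < c₁ ≤ c₂ such that c₁·α_k^D ≤ a_D ≤ c₂·α_k^D for all D, where α_k is the unique positive root of P_k(x) = 2 + x + ... + x^{k-2} − x^k. -/
/-!
The recurrence reads `a D = recOp k a D + k`, where `recOp k u D = ∑_{i=2}^{k-1} u (D - i) + 2 u (D - k)`
is monotone in the earlier terms of `u`. As `α` is a root of `P k`, every geometric sequence `c α^D`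
is a fixed point of `recOp k`, while shifting `u` by a constant `t` shifts `recOp k u` by `k t`.
So `recOp k a ≤ a` and, because `k ≥ 2`, `a + 2 ≤ recOp k (a + 2)`. Comparing each of `a` and
`a + 2` with `c α^D` by strong induction, for constants `c` fitted to the first `k` terms, gives
the two bounds.
-/

open Finset

noncomputable def recOp (k : ℕ) (u : ℕ → ℝ) (D : ℕ) : ℝ :=
  ∑ i ∈ Icc 2 (k - 1), u (D - i) + 2 * u (D - k)

section RecOp

variable {k : ℕ}

theorem pow_eq_sum_add_two_of_P_eq_zero {α : ℝ} (hα : P k α = 0) :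
    α ^ k = ∑ i ∈ Icc 2 (k - 1), α ^ (k - i) + 2 := by
  have hreflect : ∑ i ∈ Icc 2 (k - 1), α ^ (k - i) = ∑ j ∈ Icc 1 (k - 2), α ^ j := by
    apply sum_nbij' (fun i => k - i) (fun j => k - j) <;> intro i hi <;>
      simp only [mem_Icc] at hi ⊢ <;> omega
  rw [hreflect]
  unfold P at hα
  linarith

theorem recOp_mono (hk : 1 ≤ k) {u v : ℕ → ℝ} {D : ℕ} (hD : k ≤ D) (huv : ∀ j < D, u j ≤ v j) :
    recOp k u D ≤ recOp k v D := by
  have hsum : ∑ i ∈ Icc 2 (k - 1), u (D - i) ≤ ∑ i ∈ Icc 2 (k - 1), v (D - i) :=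
    sum_le_sum fun i hi => huv _ (by simp only [mem_Icc] at hi; omega)
  have hlast : u (D - k) ≤ v (D - k) := huv _ (by omega)
  unfold recOp
  linarith

theorem recOp_const_mul_pow {α : ℝ} (hα : P k α = 0) (c : ℝ) {D : ℕ} (hD : k ≤ D) :
    recOp k (fun n => c * α ^ n) D = c * α ^ D := by
  have hshift : ∀ i ≤ k, c * α ^ (D - i) = c * α ^ (D - k) * α ^ (k - i) := fun i hi => by
    rw [mul_assoc, ← pow_add, Nat.sub_add_sub_cancel hD hi]
  calc recOp k (fun n => c * α ^ n) D
      = c * α ^ (D - k) * (∑ i ∈ Icc 2 (k - 1), α ^ (k - i) + 2) := by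
        rw [recOp, sum_congr rfl fun i hi => hshift i (by simp only [mem_Icc] at hi; omega),
          ← mul_sum]
        ring
    _ = c * α ^ D := by
        rw [← pow_eq_sum_add_two_of_P_eq_zero hα, mul_assoc, ← pow_add, Nat.sub_add_cancel hD]

theorem recOp_add_const (hk : 2 ≤ k) (u : ℕ → ℝ) (t : ℝ) (D : ℕ) :
    recOp k (fun n => u n + t) D = recOp k u D + k * t := by
  have hcard : ((#(Icc 2 (k - 1)) : ℕ) : ℝ) = k - 2 := by
    rw [Nat.card_Icc, show k - 1 + 1 - 2 = k - 2 by omega, Nat.cast_sub hk, Nat.cast_ofNat]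
  simp only [recOp, sum_add_distrib, sum_const, nsmul_eq_mul, hcard]
  ring

theorem le_of_le_recOp_of_recOp_le (hk : 1 ≤ k) {u v : ℕ → ℝ} (hbase : ∀ D < k, u D ≤ v D)
    (hu : ∀ D, k ≤ D → u D ≤ recOp k u D) (hv : ∀ D, k ≤ D → recOp k v D ≤ v D) (D : ℕ) :
    u D ≤ v D := by
  induction D using Nat.strong_induction_on with
  | _ D ih =>
    rcases lt_or_ge D k with hD | hD
    · exact hbase D hD
    · exact (hu D hD).trans ((recOp_mono hk hD ih).trans (hv D hD))

end RecOp

theorem exists_forall_lt_le_mul_pow {k : ℕ} (hk : 0 < k) {α : ℝ} (hα : 0 < α) (f : ℕ → ℝ) :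
    ∃ c, ∀ D < k, f D ≤ c * α ^ D := by
  obtain ⟨M, -, hM⟩ := (range k).exists_max_image (fun D => f D / α ^ D) ⟨0, mem_range.2 hk⟩
  exact ⟨f M / α ^ M, fun D hD => (div_le_iff₀ (pow_pos hα D)).1 (hM D (mem_range.2 hD))⟩

theorem exists_pos_forall_lt_mul_pow_le {k : ℕ} (hk : 0 < k) {α : ℝ} (hα : 0 < α) {f : ℕ → ℝ}
    (hf : ∀ D, 0 < f D) : ∃ c, 0 < c ∧ ∀ D < k, c * α ^ D ≤ f D := by
  obtain ⟨m, -, hm⟩ := (range k).exists_min_image (fun D => f D / α ^ D) ⟨0, mem_range.2 hk⟩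
  exact ⟨f m / α ^ m, div_pos (hf m) (pow_pos hα m),
    fun D hD => (le_div_iff₀ (pow_pos hα D)).1 (hm D (mem_range.2 hD))⟩

theorem recurrence_growth_order (k : ℕ) (hk : 2 ≤ k) (α : ℝ)
    (hαpos : 0 < α) (hαroot : P k α = 0)
    (a : ℕ → ℝ) (hapos : ∀ D, 0 < a D)
    (hrec : ∀ D, k ≤ D → a D = ∑ i ∈ Finset.Icc 2 (k - 1), a (D - i) + 2 * a (D - k) + k) :
    ∃ c₁ c₂ : ℝ, 0 < c₁ ∧ c₁ ≤ c₂ ∧ ∀ D, c₁ * α ^ D ≤ a D ∧ a D ≤ c₂ * α ^ D := by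
  obtain ⟨c₁, hc₁, hbase₁⟩ := exists_pos_forall_lt_mul_pow_le (k := k) (by omega) hαpos hapos
  obtain ⟨c₂, hbase₂⟩ := exists_forall_lt_le_mul_pow (k := k) (by omega) hαpos (fun D => a D + 2)
  have hlower := le_of_le_recOp_of_recOp_le (by omega) hbase₁ (fun D hD => (recOp_const_mul_pow hαroot c₁ hD).ge)
    fun D hD => by rw [hrec D hD]; exact le_add_of_nonneg_right (Nat.cast_nonneg k)
  have hupper := le_of_le_recOp_of_recOp_le (u := fun D => a D + 2) (by omega)
    (fun D hD => (hbase₂ D hD).trans (by gcongr; exact le_max_right c₁ c₂))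
    (fun D hD => by
      have hk' : (2 : ℝ) ≤ k := by exact_mod_cast hk
      rw [recOp_add_const hk, hrec D hD, recOp]
      linarith)
    (fun D hD => (recOp_const_mul_pow hαroot (max c₁ c₂) hD).le)
  exact ⟨c₁, max c₁ c₂, hc₁, le_max_left c₁ c₂, fun D => ⟨hlower D, by linarith [hupper D]⟩⟩
end

section
/- Let w: ℕ × ℕ → ℕ satisfy: w(d,0) = w(0,h) = 1 for all d,h; w(d,h) ≤ w(d+1,h); w(d,h) ≤ 2·w(d−1,h) for d ≥ 1; and for d,h > 0, w(d,h) = ∑_{j=1}^{r} w(d_j, h−1) for some r ≤ k and d > d_1 > d_2 > ... > d_{r-1} ≥ d_r ≥ 0 achieving the maximum. Then for d, h > 0 and l = min(d, k−1): w(d,h) = ∑_{i=1}^{l-1} w(d−i, h−1) + 2·w(d−l, h−1). -/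
/-!
An admissible decomposition `d > d₁ > ⋯ > d_{r-1} ≥ d_r` forces `d_j ≤ d - j` for `j < r` and
`d_r ≤ d - (r - 1)`, so by monotonicity its value is at most
`w(d-1) + ⋯ + w(d-(r-1)) + 2·w(d-(r-1))`. Passing from `r - 1 = m` to `m + 1` trades one copy
of `w(d-m)` for two copies of `w(d-m-1)`, which does not decrease the bound by the doubling
inequality; hence the bound is largest for the longest decomposition, `r - 1 = l := min d (k-1)`,
and that bound is attained by `d_j = d - min j l`.
-/

/-- A decomposition `d > d_1 > d_2 > ... > d_{r-1} ≥ d_r ≥ 0` with `1 ≤ r ≤ k` branches,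
encoded by `ds j = d_{j+1}` for `j < r`. -/
def Admissible (k d r : ℕ) (ds : ℕ → ℕ) : Prop :=
  1 ≤ r ∧ r ≤ k ∧ ds 0 < d ∧
  (∀ i, i + 2 < r → ds (i + 1) < ds i) ∧
  (∀ i, i + 2 = r → ds (i + 1) ≤ ds i)

open Finset

def segmentSum (f : ℕ → ℕ) (d m : ℕ) : ℕ :=
  ∑ j ∈ range m, f (d - (j + 1)) + f (d - m)

lemma segmentSum_le_segmentSum_succ {f : ℕ → ℕ} (hdbl : ∀ n, f (n + 1) ≤ 2 * f n) {d m : ℕ}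
    (hm : m < d) : segmentSum f d m ≤ segmentSum f d (m + 1) := by
  have hstep : f (d - m) ≤ 2 * f (d - (m + 1)) := by
    simpa [show d - (m + 1) + 1 = d - m by omega] using hdbl (d - (m + 1))
  simp only [segmentSum, sum_range_succ]
  omega

lemma segmentSum_mono {f : ℕ → ℕ} (hdbl : ∀ n, f (n + 1) ≤ 2 * f n) {d m m' : ℕ}
    (hmm' : m ≤ m') (hm' : m' ≤ d) : segmentSum f d m ≤ segmentSum f d m' := by
  induction m', hmm' using Nat.le_induction with
  | base => exact le_rfl
  | succ n _ ih => exact (ih (by omega)).trans (segmentSum_le_segmentSum_succ hdbl (by omega))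

lemma segmentSum_eq_sum_Icc_add_two_mul {f : ℕ → ℕ} {d m : ℕ} (hm : 1 ≤ m) :
    segmentSum f d m = ∑ i ∈ Icc 1 (m - 1), f (d - i) + 2 * f (d - m) := by
  obtain ⟨n, rfl⟩ : ∃ n, m = n + 1 := ⟨m - 1, by omega⟩
  have hIcc : Icc 1 n = Ico 1 (n + 1) := rfl
  rw [segmentSum, Nat.add_sub_cancel, hIcc, sum_Ico_eq_sum_range, sum_range_succ]
  simp only [Nat.add_sub_cancel, add_comm 1]
  ring

namespace Admissible

variable {k d r : ℕ} {ds : ℕ → ℕ}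

lemma add_succ_le (h : Admissible k d r ds) {j : ℕ} (hj : j + 1 < r) : ds j + (j + 1) ≤ d := by
  obtain ⟨-, -, h0, hlt, -⟩ := h
  induction j with
  | zero => omega
  | succ n ih =>
    have := hlt n (by omega)
    have := ih (by omega)
    omega

lemma last_le (h : Admissible k d r ds) : ds (r - 1) ≤ d - (r - 1) := by
  rcases Nat.lt_or_ge r 2 with hr2 | hr2
  · obtain rfl : r = 1 := by have := h.1; omega
    simpa using h.2.2.1.le
  · have hle := h.2.2.2.2 (r - 2) (by omega)
    have hprev := h.add_succ_le (j := r - 2) (by omega)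
    rw [show r - 2 + 1 = r - 1 by omega] at hle hprev
    omega

lemma sub_one_le_min (h : Admissible k d r ds) : r - 1 ≤ min d (k - 1) := by
  have hrk := h.2.1
  rcases Nat.lt_or_ge r 2 with hr2 | hr2
  · omega
  · have := h.add_succ_le (j := r - 2) (by omega)
    omega

lemma sum_le_segmentSum (h : Admissible k d r ds) {f : ℕ → ℕ} (hf : Monotone f) :
    ∑ j ∈ range r, f (ds j) ≤ segmentSum f d (r - 1) := by
  obtain ⟨m, rfl⟩ : ∃ m, r = m + 1 := ⟨r - 1, by have := h.1; omega⟩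
  have hlast := h.last_le
  simp only [Nat.add_sub_cancel] at hlast ⊢
  rw [sum_range_succ, segmentSum]
  gcongr with j hj
  · exact hf (by have := h.add_succ_le (j := j) (by simpa using hj); omega)
  · exact hf hlast

end Admissible

lemma admissible_canonical {k d l : ℕ} (hl : 1 ≤ l) (hlk : l + 1 ≤ k) (hld : l ≤ d) :
    Admissible k d (l + 1) (fun j => d - min (j + 1) l) :=
  ⟨by omega, hlk, by dsimp only; omega, fun i _ => by dsimp only; omega,
    fun i _ => by dsimp only; omega⟩

lemma sum_canonical_eq_segmentSum (f : ℕ → ℕ) (d l : ℕ) :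
    ∑ j ∈ range (l + 1), f (d - min (j + 1) l) = segmentSum f d l := by
  rw [sum_range_succ, segmentSum, min_eq_right (Nat.le_succ l)]
  congr 1
  exact sum_congr rfl fun j hj => by rw [min_eq_left (mem_range.1 hj)]

theorem segment_recursion_general (k : ℕ) (hk : 2 ≤ k) (w : ℕ → ℕ → ℕ)
    (hmono : ∀ d h, w d h ≤ w (d + 1) h)
    (hdbl : ∀ d h, 1 ≤ d → w d h ≤ 2 * w (d - 1) h)
    (hmax : ∀ d h, 0 < d → 0 < h →
      (∃ r ds, Admissible k d r ds ∧ w d h = ∑ j ∈ Finset.range r, w (ds j) (h - 1)) ∧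
      (∀ r ds, Admissible k d r ds → ∑ j ∈ Finset.range r, w (ds j) (h - 1) ≤ w d h)) :
    ∀ d h, 0 < d → 0 < h →
      w d h = ∑ i ∈ Finset.Icc 1 (min d (k - 1) - 1), w (d - i) (h - 1)
        + 2 * w (d - min d (k - 1)) (h - 1) := by
  intro d h hd hh
  set l := min d (k - 1)
  set f : ℕ → ℕ := fun n => w n (h - 1)
  have hf : Monotone f := monotone_nat_of_le_succ fun n => hmono n (h - 1)
  have hf2 : ∀ n, f (n + 1) ≤ 2 * f n := fun n => hdbl (n + 1) (h - 1) (by omega)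
  obtain ⟨⟨r, ds, hadm, hsum⟩, hle⟩ := hmax d h hd hh
  have upper : w d h ≤ segmentSum f d l := by
    rw [hsum]
    exact (hadm.sum_le_segmentSum hf).trans
      (segmentSum_mono hf2 hadm.sub_one_le_min (min_le_left _ _))
  have lower : segmentSum f d l ≤ w d h := by
    rw [← sum_canonical_eq_segmentSum]
    exact hle _ _ (admissible_canonical (by omega) (by omega) (min_le_left _ _))
  rw [le_antisymm upper lower, segmentSum_eq_sum_Icc_add_two_mul (by omega)]

theorem segment_recursion (k : ℕ) (hk : 2 ≤ k) (w : ℕ → ℕ → ℕ)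
    (hax1 : ∀ d, w d 0 = 1) (hax2 : ∀ h, w 0 h = 1)
    (hmono : ∀ d h, w d h ≤ w (d + 1) h)
    (hdbl : ∀ d h, 1 ≤ d → w d h ≤ 2 * w (d - 1) h)
    (hmax : ∀ d h, 0 < d → 0 < h →
      (∃ r ds, Admissible k d r ds ∧ w d h = ∑ j ∈ Finset.range r, w (ds j) (h - 1)) ∧
      (∀ r ds, Admissible k d r ds → ∑ j ∈ Finset.range r, w (ds j) (h - 1) ≤ w d h)) :
    ∀ d h, 0 < d → 0 < h →
      w d h = ∑ i ∈ Finset.Icc 1 (min d (k - 1) - 1), w (d - i) (h - 1)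
        + 2 * w (d - min d (k - 1)) (h - 1) :=
  segment_recursion_general k hk w hmono hdbl hmax
end

section
/- Define w: ℕ × ℕ → ℕ (for fixed k ≥ 2) by w(d,0) = w(0,h) = 1 and, for d,h ≥ 1, w(d,h) = ∑_{i=1}^{l-1} w(d−i,h−1) + 2·w(d−l,h−1) where l = min(d,k−1). Then w(d,h) is monotone in both arguments: w(d,h) ≤ w(d+1,h) and w(d,h) ≤ w(d,h+1) for all d,h. -/
theorem w_monotone (k : ℕ) (hk : 2 ≤ k) (w : ℕ → ℕ → ℕ)
    (hax1 : ∀ d, w d 0 = 1) (hax2 : ∀ h, w 0 h = 1)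
    (hrec : ∀ d h, 1 ≤ d → 1 ≤ h →
      w d h = ∑ i ∈ Finset.Icc 1 (min d (k - 1) - 1), w (d - i) (h - 1)
        + 2 * w (d - min d (k - 1)) (h - 1)) :
    ∀ d h, w d h ≤ w (d + 1) h ∧ w d h ≤ w d (h + 1) := by
  suffices H : ∀ h, (∀ d, w d h ≤ w (d+1) h) ∧ (∀ d, w d h ≤ w d (h+1)) by
    intro d h; exact ⟨(H h).1 d, (H h).2 d⟩
  intro h
  induction h with
  | zero =>
    constructor
    · intro d; rw [hax1, hax1]
    · intro d
      rcases Nat.eq_zero_or_pos d with hd | hd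
      · subst hd; rw [hax2, hax2]
      · rw [hax1, hrec d 1 hd le_rfl]
        simp only [show (1:ℕ) - 1 = 0 from rfl]
        have : 2 * w (d - min d (k-1)) 0 = 2 := by rw [hax1]
        omega
  | succ h ih =>
    obtain ⟨ihP, ihQ⟩ := ih
    constructor
    · intro d
      rcases Nat.eq_zero_or_pos d with hd | hd
      · subst hd
        rw [hax2, hrec 1 (h+1) le_rfl (by omega)]
        simp only [Nat.add_sub_cancel]
        have h1 : min 1 (k-1) - 1 = 0 := by omega
        have h2 : 1 - min 1 (k-1) = 0 := by omega
        rw [h1, h2, show Finset.Icc 1 0 = (∅ : Finset ℕ) from rfl]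
        simp [hax2]
      · rw [hrec d (h+1) hd (by omega), hrec (d+1) (h+1) (by omega) (by omega)]
        simp only [Nat.add_sub_cancel]
        rcases le_or_gt (d+1) (k-1) with hle | hlt
        · have h1 : min d (k-1) = d := by omega
          have h2 : min (d+1) (k-1) = d+1 := by omega
          rw [h1, h2]
          have hsub : Finset.Icc 1 (d-1) ⊆ Finset.Icc 1 (d+1-1) := by
            apply Finset.Icc_subset_Icc le_rfl; omega
          have hsum : ∑ i ∈ Finset.Icc 1 (d-1), w (d - i) h
              ≤ ∑ i ∈ Finset.Icc 1 (d+1-1), w (d+1 - i) h := by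
            calc ∑ i ∈ Finset.Icc 1 (d-1), w (d - i) h
                ≤ ∑ i ∈ Finset.Icc 1 (d-1), w (d+1 - i) h := by
                  apply Finset.sum_le_sum
                  intro i hi
                  rw [Finset.mem_Icc] at hi
                  have : d + 1 - i = (d - i) + 1 := by omega
                  rw [this]; exact ihP _
              _ ≤ ∑ i ∈ Finset.Icc 1 (d+1-1), w (d+1 - i) h :=
                  Finset.sum_le_sum_of_subset hsub
          have hfg : w (d - d) h = w (d + 1 - (d+1)) h := by
            rw [Nat.sub_self, Nat.sub_self]
          omega
        · have h1 : min d (k-1) = k-1 := by omega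
          have h2 : min (d+1) (k-1) = k-1 := by omega
          rw [h1, h2]
          have hsum : ∑ i ∈ Finset.Icc 1 (k-1-1), w (d - i) h
              ≤ ∑ i ∈ Finset.Icc 1 (k-1-1), w (d+1 - i) h := by
            apply Finset.sum_le_sum
            intro i hi
            rw [Finset.mem_Icc] at hi
            have : d + 1 - i = (d - i) + 1 := by omega
            rw [this]; exact ihP _
          have h3 : d + 1 - (k-1) = (d - (k-1)) + 1 := by omega
          have h4 : 2 * w (d - (k-1)) h ≤ 2 * w (d + 1 - (k-1)) h := by
            rw [h3]; exact Nat.mul_le_mul_left 2 (ihP _)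
          omega
    · intro d
      rcases Nat.eq_zero_or_pos d with hd | hd
      · subst hd; rw [hax2, hax2]
      · rw [hrec d (h+1) hd (by omega), hrec d (h+2) hd (by omega)]
        simp only [Nat.add_sub_cancel]
        have e2 : h + 2 - 1 = h + 1 := by omega
        rw [e2]
        have hsum : ∑ i ∈ Finset.Icc 1 (min d (k-1) - 1), w (d - i) h
            ≤ ∑ i ∈ Finset.Icc 1 (min d (k-1) - 1), w (d - i) (h+1) := by
          apply Finset.sum_le_sum
          intro i _; exact ihQ _
        have h4 : 2 * w (d - min d (k-1)) h ≤ 2 * w (d - min d (k-1)) (h+1) :=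
          Nat.mul_le_mul_left 2 (ihQ _)
        omega
end

section
/- With w defined by w(d,0) = w(0,h) = 1 and w(d,h) = ∑_{i=1}^{l-1} w(d−i,h−1) + 2·w(d−l,h−1), l = min(d,k−1), and w*(D) = ∑_{d=0}^{D} w(d, D−d), the function w* satisfies w*(D) = ∑_{i=2}^{k-1} w*(D−i) + 2·w*(D−k) + k for all D ≥ k. -/
/-!
Sum the recursion over the interior points `1 ≤ d ≤ D - 1` of the antidiagonal `d + h = D`;
its two endpoints contribute `w 0 D = w D 0 = 1`. For fixed `1 ≤ i ≤ k - 2`, the terms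
`w (d - i) (h - 1)` run over the antidiagonal `D - 1 - i` minus its point `d = 0`, giving
`w* (D - 1 - i) - 1`. The doubled term equals `2 * w 0 _ = 2` for `d ≤ k - 2` and otherwise
runs over the whole antidiagonal `D - k`, giving `2 * w* (D - k)`. The constants add up to
`2 - (k - 2) + 2 (k - 2) = k`.
-/

open Finset

def antidiagSum (w : ℕ → ℕ → ℕ) (D : ℕ) : ℕ := ∑ d ∈ range (D + 1), w d (D - d)

section

variable (w : ℕ → ℕ → ℕ)

lemma antidiagSum_eq_add_sum_Ico_add {D : ℕ} (hD : 1 ≤ D) :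
    antidiagSum w D = w 0 D + ∑ d ∈ Ico 1 D, w d (D - d) + w D 0 := by
  rw [antidiagSum, range_eq_Ico, sum_eq_sum_Ico_succ_bot (Nat.succ_pos D),
    sum_Ico_succ_top hD, Nat.sub_zero, Nat.sub_self, add_assoc]

lemma antidiagSum_sub_succ {j D : ℕ} (hj : j < D) :
    antidiagSum w (D - (j + 1)) = ∑ d ∈ Ico j D, w (d - j) (D - d - 1) := by
  rw [antidiagSum, sum_Ico_eq_sum_range, show D - (j + 1) + 1 = D - j by omega]
  refine sum_congr rfl fun m _ => ?_
  rw [Nat.add_sub_cancel_left]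
  congr 1
  omega

variable {w}

lemma sum_Ico_segment_add_eq_sum_antidiagSum {k D : ℕ} (hkD : k ≤ D + 1)
    (hw0 : ∀ h, w 0 h = 1) :
    ∑ d ∈ Ico 1 D, ∑ i ∈ Icc 1 (min d (k - 1) - 1), w (d - i) (D - d - 1) + (k - 2) =
      ∑ i ∈ Icc 1 (k - 2), antidiagSum w (D - (i + 1)) := by
  rw [sum_comm' (t' := Icc 1 (k - 2)) (s' := fun i => Ico (i + 1) D)
    (fun d i => by simp only [mem_Ico, mem_Icc]; omega)]
  trans ∑ i ∈ Icc 1 (k - 2), (∑ d ∈ Ico (i + 1) D, w (d - i) (D - d - 1) + 1)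
  · rw [sum_add_distrib, sum_const, smul_eq_mul, mul_one, Nat.card_Icc, Nat.add_sub_cancel]
  refine sum_congr rfl fun i hi => ?_
  have hiD : i < D := by simp only [mem_Icc] at hi; omega
  rw [antidiagSum_sub_succ w hiD, sum_eq_sum_Ico_succ_bot hiD, Nat.sub_self, hw0, add_comm]

lemma sum_Ico_endpoint_eq_add_antidiagSum {k D : ℕ} (hk : 2 ≤ k) (hkD : k ≤ D)
    (hw0 : ∀ h, w 0 h = 1) :
    ∑ d ∈ Ico 1 D, w (d - min d (k - 1)) (D - d - 1) = (k - 2) + antidiagSum w (D - k) := by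
  rw [← sum_Ico_consecutive _ (show 1 ≤ k - 1 by omega) (show k - 1 ≤ D by omega)]
  congr 1
  · rw [sum_congr rfl fun d hd => by
      rw [min_eq_left (mem_Ico.1 hd).2.le, Nat.sub_self, hw0]]
    simp [Nat.sub_sub]
  · rw [show D - k = D - (k - 1 + 1) by omega, antidiagSum_sub_succ w (by omega)]
    refine sum_congr rfl fun d hd => ?_
    rw [min_eq_right (mem_Ico.1 hd).1]

end

theorem wstar_recurrence (k : ℕ) (hk : 2 ≤ k) (w : ℕ → ℕ → ℕ)
    (hax1 : ∀ d, w d 0 = 1) (hax2 : ∀ h, w 0 h = 1)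
    (hrec : ∀ d h, 1 ≤ d → 1 ≤ h →
      w d h = ∑ i ∈ Finset.Icc 1 (min d (k - 1) - 1), w (d - i) (h - 1)
        + 2 * w (d - min d (k - 1)) (h - 1))
    (wstar : ℕ → ℕ)
    (hws : ∀ D, wstar D = ∑ d ∈ Finset.range (D + 1), w d (D - d)) :
    ∀ D, k ≤ D →
      wstar D = ∑ i ∈ Finset.Icc 2 (k - 1), wstar (D - i) + 2 * wstar (D - k) + k := by
  intro D hD
  obtain rfl : wstar = antidiagSum w := funext hws
  have hinterior : ∑ d ∈ Ico 1 D, w d (D - d) =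
      ∑ d ∈ Ico 1 D, ∑ i ∈ Icc 1 (min d (k - 1) - 1), w (d - i) (D - d - 1) +
        2 * ∑ d ∈ Ico 1 D, w (d - min d (k - 1)) (D - d - 1) := by
    rw [mul_sum, ← sum_add_distrib]
    exact sum_congr rfl fun d hd => by
      simp only [mem_Ico] at hd
      exact hrec d (D - d) hd.1 (by omega)
  have hshift : ∑ i ∈ Icc 2 (k - 1), antidiagSum w (D - i) =
      ∑ i ∈ Icc 1 (k - 2), antidiagSum w (D - (i + 1)) :=
    sum_nbij' (· - 1) (· + 1) (fun i hi => by simp only [mem_Icc] at hi ⊢; omega)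
      (fun i hi => by simp only [mem_Icc] at hi ⊢; omega)
      (fun i hi => by simp only [mem_Icc] at hi; omega) (fun i _ => rfl)
      (fun i hi => by simp only [mem_Icc] at hi; congr 1; omega)
  rw [antidiagSum_eq_add_sum_Ico_add w (by omega), hax1, hax2, hinterior,
    sum_Ico_endpoint_eq_add_antidiagSum hk hD hax2, hshift,
    ← sum_Ico_segment_add_eq_sum_antidiagSum (by omega) hax2]
  omega
end
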